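/- arXiv:2507.11157 — 6 statements merged into one kernel-verified Lean document; each statement's English description precedes it below -/
import Mathlib

section
/- Let P ∈ ℝ^{n×n}, Π ∈ ℝ^{m×m}, A ∈ ℝ^{m×n}, p_0 ∈ ℝ^n, π_0 ∈ ℝ^m. Suppose π_0^T Π^k A = p_0^T P^k for all k ∈ ℕ, and there exist pairwise distinct indices i_0,...,i_{m-1} ∈ ℕ such that the vectors π_{i_0},...,π_{i_{m-1}} (where π_k^T := π_0^T Π^k) are linearly independent. Then ΠA = AP and π_0^T A = p_0^T. -/
open Matrix

/-- If an aggregation matches all transient distributions and m of the aggregated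
transient distributions are linearly independent, then the aggregation is exact. -/
theorem k_exact_implies_exact {n m : ℕ} (P : Matrix (Fin n) (Fin n) ℝ)
    (Pi' : Matrix (Fin m) (Fin m) ℝ) (A : Matrix (Fin m) (Fin n) ℝ)
    (p0 : Fin n → ℝ) (π0 : Fin m → ℝ)
    (hmatch : ∀ k : ℕ, (π0 ᵥ* Pi' ^ k) ᵥ* A = p0 ᵥ* P ^ k)
    (idx : Fin m → ℕ) (hidx : Function.Injective idx)
    (hli : LinearIndependent ℝ (fun t : Fin m => π0 ᵥ* Pi' ^ (idx t))) :
    Pi' * A = A * P ∧ π0 ᵥ* A = p0 := by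
  have h0 : π0 ᵥ* A = p0 := by simpa using hmatch 0
  refine ⟨?_, h0⟩
  have key : ∀ k : ℕ, (π0 ᵥ* Pi' ^ k) ᵥ* (Pi' * A) = (π0 ᵥ* Pi' ^ k) ᵥ* (A * P) := by
    intro k
    have h1 : (π0 ᵥ* Pi' ^ k) ᵥ* (Pi' * A) = π0 ᵥ* Pi' ^ (k + 1) ᵥ* A := by
      rw [vecMul_vecMul, ← Matrix.mul_assoc, ← pow_succ, ← vecMul_vecMul]
    have h2 : (π0 ᵥ* Pi' ^ k) ᵥ* (A * P) = (p0 ᵥ* P ^ k) ᵥ* P := by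
      rw [vecMul_vecMul, ← Matrix.mul_assoc, ← vecMul_vecMul, ← vecMul_vecMul, hmatch k]
    rw [h1, h2, hmatch (k + 1), pow_succ, ← vecMul_vecMul]
  have hspan : Submodule.span ℝ (Set.range fun t : Fin m => π0 ᵥ* Pi' ^ (idx t)) = ⊤ :=
    hli.span_eq_top_of_card_eq_finrank' (by simp)
  have hmap : (Pi' * A).vecMulLinear = (A * P).vecMulLinear :=
    LinearMap.ext_on_range hspan fun t => key (idx t)
  ext i j
  have := congrFun (congrFun (congrArg (fun f => f.toFun) hmap) (Pi.single i 1)) j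
  simpa [Matrix.vecMulLinear_apply, Matrix.single_one_vecMul] using this
end

section
/- Let P ∈ ℝ^{n×n} be row-stochastic with nonnegative entries, and let (Π, A, π_0) be an arbitrary aggregation with error vectors e_k^T := π_0^T Π^k A − p_0^T P^k. Then for all k, ‖e_{k+1}‖_1 ≤ ‖e_k‖_1 + ⟨|π_k|, |ΠA − AP|·𝟙_n⟩, where π_k^T = π_0^T Π^k. -/
open Matrix

/-- One-step error bound for an arbitrary aggregation. -/
theorem error_step_bound {n m : ℕ} (P : Matrix (Fin n) (Fin n) ℝ)
    (hPnn : ∀ i j, 0 ≤ P i j) (hProw : ∀ i, ∑ j, P i j = 1)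
    (Pi' : Matrix (Fin m) (Fin m) ℝ) (A : Matrix (Fin m) (Fin n) ℝ)
    (p0 : Fin n → ℝ) (π0 : Fin m → ℝ) :
    ∀ k : ℕ,
      ∑ t, |(((π0 ᵥ* Pi' ^ (k + 1)) ᵥ* A) - (p0 ᵥ* P ^ (k + 1))) t|
        ≤ ∑ t, |(((π0 ᵥ* Pi' ^ k) ᵥ* A) - (p0 ᵥ* P ^ k)) t|
          + ∑ i, |(π0 ᵥ* Pi' ^ k) i| * (∑ t, |(Pi' * A - A * P) i t|) := by
  intro k
  set x : Fin m → ℝ := π0 ᵥ* Pi' ^ k with hx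
  set e : Fin n → ℝ := (x ᵥ* A) - (p0 ᵥ* P ^ k) with he
  have key : ∀ t, (((π0 ᵥ* Pi' ^ (k + 1)) ᵥ* A) - (p0 ᵥ* P ^ (k + 1))) t
      = (x ᵥ* (Pi' * A - A * P)) t + (e ᵥ* P) t := by
    intro t
    have h1 : π0 ᵥ* Pi' ^ (k + 1) = x ᵥ* Pi' := by
      rw [hx, pow_succ, ← vecMul_vecMul]
    have h2 : p0 ᵥ* P ^ (k + 1) = (p0 ᵥ* P ^ k) ᵥ* P := by
      rw [pow_succ, ← vecMul_vecMul]
    simp only [h1, h2, Pi.sub_apply, he, sub_vecMul, vecMul_sub, vecMul_vecMul]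
    ring
  calc ∑ t, |(((π0 ᵥ* Pi' ^ (k + 1)) ᵥ* A) - (p0 ᵥ* P ^ (k + 1))) t|
      = ∑ t, |(x ᵥ* (Pi' * A - A * P)) t + (e ᵥ* P) t| := by
        simp only [key]
    _ ≤ ∑ t, (|(x ᵥ* (Pi' * A - A * P)) t| + |(e ᵥ* P) t|) :=
        Finset.sum_le_sum fun t _ => abs_add_le _ _
    _ = ∑ t, |(e ᵥ* P) t| + ∑ t, |(x ᵥ* (Pi' * A - A * P)) t| := by
        rw [Finset.sum_add_distrib, add_comm]
    _ ≤ ∑ t, |e t| + ∑ i, |x i| * (∑ t, |(Pi' * A - A * P) i t|) := by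
        refine add_le_add ?_ ?_
        · calc ∑ t, |(e ᵥ* P) t| ≤ ∑ t, ∑ s, |e s| * P s t := by
                refine Finset.sum_le_sum fun t _ => ?_
                simp only [vecMul, dotProduct]
                refine (Finset.abs_sum_le_sum_abs _ _).trans ?_
                refine Finset.sum_le_sum fun s _ => ?_
                rw [abs_mul, abs_of_nonneg (hPnn s t)]
            _ = ∑ s, |e s| * ∑ t, P s t := by
                rw [Finset.sum_comm]; simp [Finset.mul_sum]
            _ = ∑ s, |e s| := by simp [hProw]
        · calc ∑ t, |(x ᵥ* (Pi' * A - A * P)) t|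
              ≤ ∑ t, ∑ i, |x i| * |(Pi' * A - A * P) i t| := by
                refine Finset.sum_le_sum fun t _ => ?_
                simp only [vecMul, dotProduct]
                refine (Finset.abs_sum_le_sum_abs _ _).trans ?_
                refine Finset.sum_le_sum fun i _ => ?_
                rw [abs_mul]
            _ = ∑ i, |x i| * (∑ t, |(Pi' * A - A * P) i t|) := by
                rw [Finset.sum_comm]; simp [Finset.mul_sum]
end

section
/- Let P ∈ ℝ^{n×n} be row-stochastic with nonnegative entries, and (Π, A, π_0) an aggregation with errors e_k^T := π_0^T Π^k A − p_0^T P^k. Then for all k ∈ ℕ, ‖e_k‖_1 ≤ ‖e_0‖_1 + Σ_{j=0}^{k−1} ⟨|π_j|, |ΠA − AP|·𝟙_n⟩. -/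
open Matrix

lemma vecMul_l1_le {n m : ℕ} (v : Fin m → ℝ) (M : Matrix (Fin m) (Fin n) ℝ) :
    ∑ t, |(v ᵥ* M) t| ≤ ∑ i, |v i| * (∑ t, |M i t|) := by
  calc ∑ t, |(v ᵥ* M) t| ≤ ∑ t, ∑ i, |v i * M i t| := by
        apply Finset.sum_le_sum; intro t _
        simp only [Matrix.vecMul, dotProduct]
        exact Finset.abs_sum_le_sum_abs _ _
    _ = ∑ i, |v i| * (∑ t, |M i t|) := by
        rw [Finset.sum_comm]
        simp [abs_mul, Finset.mul_sum]

lemma vecMul_stoch_l1_le {n : ℕ} (v : Fin n → ℝ) (P : Matrix (Fin n) (Fin n) ℝ)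
    (hPnn : ∀ i j, 0 ≤ P i j) (hProw : ∀ i, ∑ j, P i j = 1) :
    ∑ t, |(v ᵥ* P) t| ≤ ∑ i, |v i| := by
  calc ∑ t, |(v ᵥ* P) t| ≤ ∑ i, |v i| * (∑ t, |P i t|) := vecMul_l1_le v P
    _ = ∑ i, |v i| := by
        apply Finset.sum_congr rfl; intro i _
        rw [show (∑ t, |P i t|) = ∑ t, P i t from
          Finset.sum_congr rfl fun t _ => abs_of_nonneg (hPnn i t), hProw i, mul_one]

/-- Cumulative error bound for an arbitrary aggregation. -/
theorem error_cumulative_bound {n m : ℕ} (P : Matrix (Fin n) (Fin n) ℝ)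
    (hPnn : ∀ i j, 0 ≤ P i j) (hProw : ∀ i, ∑ j, P i j = 1)
    (Pi' : Matrix (Fin m) (Fin m) ℝ) (A : Matrix (Fin m) (Fin n) ℝ)
    (p0 : Fin n → ℝ) (π0 : Fin m → ℝ) :
    ∀ k : ℕ,
      ∑ t, |(((π0 ᵥ* Pi' ^ k) ᵥ* A) - (p0 ᵥ* P ^ k)) t|
        ≤ ∑ t, |((π0 ᵥ* A) - p0) t|
          + ∑ j ∈ Finset.range k,
              ∑ i, |(π0 ᵥ* Pi' ^ j) i| * (∑ t, |(Pi' * A - A * P) i t|) := by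
  intro k
  induction k with
  | zero => simp
  | succ k ih =>
    have key : (((π0 ᵥ* Pi' ^ (k+1)) ᵥ* A) - (p0 ᵥ* P ^ (k+1)))
        = ((π0 ᵥ* Pi' ^ k) ᵥ* (Pi' * A - A * P))
          + ((((π0 ᵥ* Pi' ^ k) ᵥ* A) - (p0 ᵥ* P ^ k)) ᵥ* P) := by
      rw [pow_succ, pow_succ]
      ext t
      simp only [Matrix.sub_vecMul, Matrix.vecMul_sub, ← Matrix.vecMul_vecMul,
        Pi.add_apply, Pi.sub_apply]
      ring
    calc ∑ t, |(((π0 ᵥ* Pi' ^ (k+1)) ᵥ* A) - (p0 ᵥ* P ^ (k+1))) t|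
        ≤ ∑ t, (|((π0 ᵥ* Pi' ^ k) ᵥ* (Pi' * A - A * P)) t|
            + |((((π0 ᵥ* Pi' ^ k) ᵥ* A) - (p0 ᵥ* P ^ k)) ᵥ* P) t|) := by
          apply Finset.sum_le_sum; intro t _
          rw [key]; exact abs_add_le _ _
      _ = (∑ t, |((π0 ᵥ* Pi' ^ k) ᵥ* (Pi' * A - A * P)) t|)
            + ∑ t, |((((π0 ᵥ* Pi' ^ k) ᵥ* A) - (p0 ᵥ* P ^ k)) ᵥ* P) t| :=
          Finset.sum_add_distrib
      _ ≤ (∑ i, |(π0 ᵥ* Pi' ^ k) i| * (∑ t, |(Pi' * A - A * P) i t|))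
            + ∑ t, |(((π0 ᵥ* Pi' ^ k) ᵥ* A) - (p0 ᵥ* P ^ k)) t| := by
          exact add_le_add (vecMul_l1_le _ _) (vecMul_stoch_l1_le _ P hPnn hProw)
      _ ≤ _ := by
          rw [Finset.sum_range_succ]
          linarith [ih]
end

section
/- Let P ∈ ℝ^{n×n} be row-stochastic with nonnegative entries, and (Π, A, π_0) an aggregation with errors e_k. If ‖Π‖_∞ ≠ 1 then ‖e_k‖_1 ≤ ‖e_0‖_1 + ‖π_0‖_1 · ‖ΠA − AP‖_∞ · (‖Π‖_∞^k − 1)/(‖Π‖_∞ − 1), and if ‖Π‖_∞ = 1 then ‖e_k‖_1 ≤ ‖e_0‖_1 + ‖π_0‖_1 · ‖ΠA − AP‖_∞ · k. -/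
open Matrix

/-- The maximum absolute row sum norm. -/
noncomputable def rowSumNorm {n m : ℕ} (M : Matrix (Fin n) (Fin m) ℝ) : ℝ :=
  ⨆ i, ∑ j, |M i j|

lemma rowSumNorm_nonneg {n m : ℕ} (M : Matrix (Fin n) (Fin m) ℝ) :
    0 ≤ rowSumNorm M :=
  Real.iSup_nonneg fun i => Finset.sum_nonneg fun j _ => abs_nonneg _

lemma row_le_rowSumNorm {n m : ℕ} (M : Matrix (Fin n) (Fin m) ℝ) (i : Fin n) :
    ∑ j, |M i j| ≤ rowSumNorm M := by
  unfold rowSumNorm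
  exact le_ciSup (f := fun i => ∑ j, |M i j|) (Set.Finite.bddAbove (Set.finite_range _)) i

lemma norm1_vecMul_le {n m : ℕ} (v : Fin n → ℝ) (M : Matrix (Fin n) (Fin m) ℝ) :
    ∑ t, |(v ᵥ* M) t| ≤ (∑ i, |v i|) * rowSumNorm M := by
  have h1 : ∑ t, |(v ᵥ* M) t| ≤ ∑ t, ∑ i, |v i| * |M i t| := by
    apply Finset.sum_le_sum
    intro t _
    calc |(v ᵥ* M) t| = |∑ i, v i * M i t| := by simp [Matrix.vecMul, dotProduct]
      _ ≤ ∑ i, |v i * M i t| := Finset.abs_sum_le_sum_abs _ _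
      _ = ∑ i, |v i| * |M i t| := by simp [abs_mul]
  calc ∑ t, |(v ᵥ* M) t| ≤ ∑ t, ∑ i, |v i| * |M i t| := h1
    _ = ∑ i, |v i| * ∑ t, |M i t| := by rw [Finset.sum_comm]; simp [Finset.mul_sum]
    _ ≤ ∑ i, |v i| * rowSumNorm M := by
        exact Finset.sum_le_sum fun i _ =>
          mul_le_mul_of_nonneg_left (row_le_rowSumNorm M i) (abs_nonneg _)
    _ = (∑ i, |v i|) * rowSumNorm M := (Finset.sum_mul _ _ _).symm

lemma norm1_vecMul_stochastic_le {n : ℕ} (P : Matrix (Fin n) (Fin n) ℝ)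
    (hPnn : ∀ i j, 0 ≤ P i j) (hProw : ∀ i, ∑ j, P i j = 1)
    (w : Fin n → ℝ) : ∑ t, |(w ᵥ* P) t| ≤ ∑ i, |w i| := by
  calc ∑ t, |(w ᵥ* P) t| ≤ ∑ t, ∑ i, |w i| * P i t := by
        apply Finset.sum_le_sum
        intro t _
        calc |(w ᵥ* P) t| = |∑ i, w i * P i t| := by
              simp [Matrix.vecMul, dotProduct]
          _ ≤ ∑ i, |w i * P i t| := Finset.abs_sum_le_sum_abs _ _
          _ = ∑ i, |w i| * P i t := by
              apply Finset.sum_congr rfl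
              intro i _
              rw [abs_mul, abs_of_nonneg (hPnn i t)]
    _ = ∑ i, |w i| * ∑ t, P i t := by rw [Finset.sum_comm]; simp [Finset.mul_sum]
    _ = ∑ i, |w i| := by simp [hProw]

lemma norm1_vecMul_pow_le {m : ℕ} (Pi' : Matrix (Fin m) (Fin m) ℝ) (π0 : Fin m → ℝ) :
    ∀ k : ℕ, ∑ t, |(π0 ᵥ* Pi' ^ k) t| ≤ (∑ i, |π0 i|) * rowSumNorm Pi' ^ k := by
  intro k
  induction k with
  | zero => simp [Matrix.vecMul_one]
  | succ k ih =>
      have h1 : (π0 ᵥ* Pi' ^ (k + 1)) = (π0 ᵥ* Pi' ^ k) ᵥ* Pi' := by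
        rw [pow_succ, ← Matrix.vecMul_vecMul]
      rw [h1]
      calc ∑ t, |((π0 ᵥ* Pi' ^ k) ᵥ* Pi') t|
          ≤ (∑ t, |(π0 ᵥ* Pi' ^ k) t|) * rowSumNorm Pi' := norm1_vecMul_le _ _
        _ ≤ ((∑ i, |π0 i|) * rowSumNorm Pi' ^ k) * rowSumNorm Pi' :=
            mul_le_mul_of_nonneg_right ih (rowSumNorm_nonneg _)
        _ = (∑ i, |π0 i|) * rowSumNorm Pi' ^ (k + 1) := by ring

/-- General error bound for an arbitrary aggregation. -/
theorem error_general_bound {n m : ℕ} (P : Matrix (Fin n) (Fin n) ℝ)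
    (hPnn : ∀ i j, 0 ≤ P i j) (hProw : ∀ i, ∑ j, P i j = 1)
    (Pi' : Matrix (Fin m) (Fin m) ℝ) (A : Matrix (Fin m) (Fin n) ℝ)
    (p0 : Fin n → ℝ) (π0 : Fin m → ℝ) :
    ∀ k : ℕ,
      (rowSumNorm Pi' ≠ 1 →
        ∑ t, |(((π0 ᵥ* Pi' ^ k) ᵥ* A) - (p0 ᵥ* P ^ k)) t|
          ≤ ∑ t, |((π0 ᵥ* A) - p0) t|
            + (∑ i, |π0 i|) * rowSumNorm (Pi' * A - A * P)
              * ((rowSumNorm Pi' ^ k - 1) / (rowSumNorm Pi' - 1))) ∧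
      (rowSumNorm Pi' = 1 →
        ∑ t, |(((π0 ᵥ* Pi' ^ k) ᵥ* A) - (p0 ᵥ* P ^ k)) t|
          ≤ ∑ t, |((π0 ᵥ* A) - p0) t|
            + (∑ i, |π0 i|) * rowSumNorm (Pi' * A - A * P) * k) := by
  set r := rowSumNorm Pi' with hr
  set B := Pi' * A - A * P with hB
  set c := (∑ i, |π0 i|) * rowSumNorm B with hc
  have hc0 : 0 ≤ c :=
    mul_nonneg (Finset.sum_nonneg fun i _ => abs_nonneg _) (rowSumNorm_nonneg _)
  -- key inequality
  have key : ∀ k : ℕ,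
      ∑ t, |(((π0 ᵥ* Pi' ^ k) ᵥ* A) - (p0 ᵥ* P ^ k)) t|
        ≤ ∑ t, |((π0 ᵥ* A) - p0) t| + c * ∑ j ∈ Finset.range k, r ^ j := by
    intro k
    induction k with
    | zero => simp [Matrix.vecMul_one]
    | succ k ih =>
        set x := π0 ᵥ* Pi' ^ k with hx
        set y := p0 ᵥ* P ^ k with hy
        have h1 : π0 ᵥ* Pi' ^ (k + 1) = x ᵥ* Pi' := by
          rw [hx, pow_succ, ← Matrix.vecMul_vecMul]
        have h2 : p0 ᵥ* P ^ (k + 1) = y ᵥ* P := by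
          rw [hy, pow_succ, ← Matrix.vecMul_vecMul]
        have hrec : ((π0 ᵥ* Pi' ^ (k + 1)) ᵥ* A) - (p0 ᵥ* P ^ (k + 1))
            = (((x ᵥ* A) - y) ᵥ* P) + (x ᵥ* B) := by
          rw [h1, h2, hB, Matrix.vecMul_sub (Pi' * A) (A * P) x, Matrix.sub_vecMul P (x ᵥ* A) y,
            ← Matrix.vecMul_vecMul x Pi' A, ← Matrix.vecMul_vecMul x A P]
          abel
        rw [hrec]
        have habs : ∑ t, |((((x ᵥ* A) - y) ᵥ* P) + (x ᵥ* B)) t|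
            ≤ (∑ t, |(((x ᵥ* A) - y) ᵥ* P) t|) + ∑ t, |(x ᵥ* B) t| := by
          rw [← Finset.sum_add_distrib]
          exact Finset.sum_le_sum fun t _ => abs_add_le _ _
        have hP : ∑ t, |(((x ᵥ* A) - y) ᵥ* P) t| ≤ ∑ t, |((x ᵥ* A) - y) t| :=
          norm1_vecMul_stochastic_le P hPnn hProw _
        have hBle : ∑ t, |(x ᵥ* B) t| ≤ (∑ t, |x t|) * rowSumNorm B :=
          norm1_vecMul_le _ _
        have hxle : ∑ t, |x t| ≤ (∑ i, |π0 i|) * r ^ k :=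
          norm1_vecMul_pow_le Pi' π0 k
        have hB2 : (∑ t, |x t|) * rowSumNorm B ≤ ((∑ i, |π0 i|) * r ^ k) * rowSumNorm B :=
          mul_le_mul_of_nonneg_right hxle (rowSumNorm_nonneg _)
        have hfin : ((∑ i, |π0 i|) * r ^ k) * rowSumNorm B = c * r ^ k := by
          rw [hc]; ring
        calc ∑ t, |((((x ᵥ* A) - y) ᵥ* P) + (x ᵥ* B)) t|
            ≤ (∑ t, |(((x ᵥ* A) - y) ᵥ* P) t|) + ∑ t, |(x ᵥ* B) t| := habs
          _ ≤ (∑ t, |((x ᵥ* A) - y) t|) + (∑ t, |x t|) * rowSumNorm B :=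
              add_le_add hP hBle
          _ ≤ (∑ t, |((π0 ᵥ* A) - p0) t| + c * ∑ j ∈ Finset.range k, r ^ j)
              + c * r ^ k := add_le_add ih (hB2.trans_eq hfin)
          _ = ∑ t, |((π0 ᵥ* A) - p0) t| + c * ∑ j ∈ Finset.range (k + 1), r ^ j := by
              rw [Finset.sum_range_succ]; ring
  intro k
  constructor
  · intro hne
    have := key k
    rwa [geom_sum_eq hne k] at this
  · intro he
    have := key k
    rw [he] at this
    simpa using this
end

section
/- The Arnoldi aggregation of state space size j is (j−1)-exact: if H_j is lower Hessenberg, E ∈ ℝ^{j×n} is zero except in its last row, H_j Q_j + E = Q_j P, the first row of Q_j equals p_0^T/‖p_0‖_2, and π_0 = (‖p_0‖_2, 0,...,0)^T, then for all 0 ≤ k ≤ j−1, π_0^T H_j^k Q_j = p_0^T P^k. -/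
open Matrix

/-- The Arnoldi aggregation of state space size `j` is `(j-1)`-exact. -/
theorem arnoldi_aggregation_k_exact {j n : ℕ} (hj : 0 < j)
    (H : Matrix (Fin j) (Fin j) ℝ) (Q E : Matrix (Fin j) (Fin n) ℝ)
    (P : Matrix (Fin n) (Fin n) ℝ) (p0 : Fin n → ℝ)
    (hH : ∀ a b : Fin j, (a : ℕ) + 1 < (b : ℕ) → H a b = 0)
    (hE : ∀ a : Fin j, (a : ℕ) ≠ j - 1 → ∀ t, E a t = 0)
    (hrel : H * Q + E = Q * P)
    (hQ0 : ∀ t, Q ⟨0, hj⟩ t = p0 t / Real.sqrt (∑ s, p0 s ^ 2))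
    (π0 : Fin j → ℝ)
    (hπ0 : ∀ i : Fin j, π0 i = if (i : ℕ) = 0 then Real.sqrt (∑ t, p0 t ^ 2) else 0) :
    ∀ k, k ≤ j - 1 → (π0 ᵥ* H ^ k) ᵥ* Q = p0 ᵥ* P ^ k := by
  -- support lemma
  have hsupp : ∀ k, ∀ i : Fin j, k < (i : ℕ) → (π0 ᵥ* H ^ k) i = 0 := by
    intro k
    induction k with
    | zero =>
      intro i hi
      simp only [pow_zero, vecMul_one]
      rw [hπ0]
      simp only [ite_eq_right_iff]
      intro h; omega
    | succ k ih =>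
      intro i hi
      rw [pow_succ, ← vecMul_vecMul, vecMul, dotProduct]
      apply Finset.sum_eq_zero
      intro a _
      by_cases ha : k < (a : ℕ)
      · rw [ih a ha]; ring
      · rw [hH a i (by omega)]; ring
  by_cases hzero : (∑ s, p0 s ^ 2) = 0
  · have hp0 : p0 = 0 := by
      funext t
      have := (Finset.sum_eq_zero_iff_of_nonneg (fun s _ => sq_nonneg (p0 s))).mp hzero t (Finset.mem_univ t)
      exact pow_eq_zero_iff (n := 2) (by norm_num) |>.mp this
    have hπz : π0 = 0 := by
      funext i
      rw [hπ0, hzero]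
      simp
    intro k _
    rw [hp0, hπz]
    simp
  · have hsq : Real.sqrt (∑ s, p0 s ^ 2) ≠ 0 := by
      refine Real.sqrt_ne_zero'.mpr ?_
      rcases lt_or_eq_of_le (Finset.sum_nonneg (fun s _ => sq_nonneg (p0 s))) with h | h
      · exact h
      · exact absurd h.symm hzero
    intro k
    induction k with
    | zero =>
      intro _
      simp only [pow_zero, vecMul_one]
      funext t
      rw [vecMul, dotProduct]
      rw [Finset.sum_eq_single ⟨0, hj⟩]
      · rw [hπ0, hQ0]
        simp [mul_div_cancel₀, hsq]
      · intro b _ hb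
        rw [hπ0]
        have : (b : ℕ) ≠ 0 := by
          intro h
          apply hb
          exact Fin.ext h
        simp [this]
      · intro h; exact absurd (Finset.mem_univ _) h
    | succ k ih =>
      intro hk
      have hk' : k ≤ j - 1 := by omega
      have hE0 : (π0 ᵥ* H ^ k) ᵥ* E = 0 := by
        funext t
        rw [vecMul, dotProduct]
        apply Finset.sum_eq_zero
        intro a _
        by_cases ha : (a : ℕ) = j - 1
        · rw [hsupp k a (by omega)]; ring
        · rw [hE a ha t]; ring
      have hHQ : H * Q = Q * P - E := eq_sub_of_add_eq hrel
      have h1 : (π0 ᵥ* H ^ (k+1)) ᵥ* Q = (π0 ᵥ* H ^ k) ᵥ* (H * Q) := by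
        rw [pow_succ, ← Matrix.vecMul_vecMul, Matrix.vecMul_vecMul (π0 ᵥ* H ^ k) H Q]
      rw [h1, hHQ, Matrix.vecMul_sub, hE0, sub_zero, ← Matrix.vecMul_vecMul, ih hk',
        Matrix.vecMul_vecMul, ← pow_succ]
end

section
/- Any (j−1)-exact aggregation of (p_0, P) has state space size at least dim K^j(p_0, P): if π_0^T Π^k A = p_0^T P^k for all 0 ≤ k ≤ j−1 with Π ∈ ℝ^{m×m}, A ∈ ℝ^{m×n}, then the span of {p_0^T P^k : 0 ≤ k ≤ j−1} is contained in the row space of A, hence m ≥ dim K^j(p_0, P). -/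
open Matrix

/-- Any `(j-1)`-exact aggregation has state space size at least the dimension of
the `j`-th Krylov subspace. -/
theorem k_exact_aggregation_minimal_size {n m j : ℕ} (P : Matrix (Fin n) (Fin n) ℝ)
    (p0 : Fin n → ℝ) (Pi' : Matrix (Fin m) (Fin m) ℝ) (A : Matrix (Fin m) (Fin n) ℝ)
    (π0 : Fin m → ℝ)
    (hex : ∀ k < j, (π0 ᵥ* Pi' ^ k) ᵥ* A = p0 ᵥ* P ^ k) :
    Submodule.span ℝ ((fun k => p0 ᵥ* P ^ k) '' Set.Iio j)
      ≤ Submodule.span ℝ (Set.range fun i : Fin m => A i) ∧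
    Module.finrank ℝ (Submodule.span ℝ ((fun k => p0 ᵥ* P ^ k) '' Set.Iio j)) ≤ m := by
  have hle : Submodule.span ℝ ((fun k => p0 ᵥ* P ^ k) '' Set.Iio j)
      ≤ Submodule.span ℝ (Set.range fun i : Fin m => A i) := by
    rw [Submodule.span_le]
    rintro x ⟨k, hk, rfl⟩
    show p0 ᵥ* P ^ k ∈ _
    rw [← hex k hk]
    have : (π0 ᵥ* Pi' ^ k) ᵥ* A = ∑ i : Fin m, (π0 ᵥ* Pi' ^ k) i • A i := by
      ext jj
      simp [vecMul, dotProduct, Finset.sum_apply]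
    rw [this]
    exact Submodule.sum_mem _ fun i _ =>
      Submodule.smul_mem _ _ (Submodule.subset_span ⟨i, rfl⟩)
  refine ⟨hle, le_trans (Submodule.finrank_mono hle) ?_⟩
  exact le_trans (finrank_range_le_card _) (by simp)
end
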